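/- Let A be a real n×m matrix (n ≤ m) with all columns nonzero and no two columns scalar multiples of each other, and let x be distributed according to the standard Gaussian measure on ℝ^n. Then almost surely ⟨a_i, x⟩ ≠ 0 for all i, and A·sign(Aᵀx) is a vertex (extreme point) of the zonotope Z(A); i.e., the event that x maps to some zonotope vertex has probability one. -/
import Mathlib


open Matrix MeasureTheory ProbabilityTheory

/-- The zonotope generated by the columns of an `n × m` real matrix `A`. -/
def zonotope {n m : ℕ} (A : Matrix (Fin n) (Fin m) ℝ) : Set (Fin n → ℝ) :=
  {v | ∃ x : Fin m → ℝ, (∀ i, x i ∈ Set.Icc (-1 : ℝ) 1) ∧ v = A.mulVec x}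

/-- The sign vector `sign(Aᵀ x) ∈ {-1,1}^m` (entries are `Real.sign ⟨aᵢ, x⟩`). -/
noncomputable def signVec {n m : ℕ} (A : Matrix (Fin n) (Fin m) ℝ) (x : Fin n → ℝ) :
    Fin m → ℝ :=
  fun i => Real.sign (Aᵀ.mulVec x i)

/-- The standard Gaussian measure on `ℝⁿ`: the law of a vector with independent
standard normal entries. -/
noncomputable def stdGaussianPi (n : ℕ) : Measure (Fin n → ℝ) :=
  Measure.pi fun _ => gaussianReal 0 1

/-- `Measure.pi` preserves absolute continuity. -/
lemma pi_ac' {N : ℕ} (μ ν : Fin N → Measure ℝ)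
    [∀ i, IsFiniteMeasure (μ i)] [∀ i, SigmaFinite (ν i)]
    (h : ∀ i, μ i ≪ ν i) : Measure.pi μ ≪ Measure.pi ν := by
  induction N with
  | zero =>
      rw [Measure.pi_of_empty μ, Measure.pi_of_empty ν]
  | succ N ih =>
      have hT := measurePreserving_piFinSuccAbove μ 0
      have hT' := measurePreserving_piFinSuccAbove ν 0
      rw [← hT.symm (MeasurableEquiv.piFinSuccAbove (fun _ => ℝ) 0) |>.map_eq,
        ← hT'.symm (MeasurableEquiv.piFinSuccAbove (fun _ => ℝ) 0) |>.map_eq]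
      exact ((h 0).prod (ih _ _ fun i => h _)).map
        (MeasurableEquiv.piFinSuccAbove (fun _ => ℝ) 0).symm.measurable

/-- The standard Gaussian is absolutely continuous w.r.t. Lebesgue measure. -/
lemma stdGaussianPi_ac (n : ℕ) :
    stdGaussianPi n ≪ (volume : Measure (Fin n → ℝ)) := by
  rw [show (volume : Measure (Fin n → ℝ)) = Measure.pi fun _ => volume from volume_pi]
  exact pi_ac' _ _ fun i => gaussianReal_absolutelyContinuous 0 one_ne_zero

/-- A hyperplane through the origin is a Gaussian null set. -/
lemma ae_dotProduct_ne (n : ℕ) (a : Fin n → ℝ) (ha : a ≠ 0) :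
    ∀ᵐ x ∂(stdGaussianPi n), a ⬝ᵥ x ≠ 0 := by
  refine (stdGaussianPi_ac n).ae_le ?_
  show ∀ᵐ x ∂(volume : Measure (Fin n → ℝ)), a ⬝ᵥ x ≠ 0
  rw [ae_iff]
  have hφ : ∀ x : Fin n → ℝ,
      (∑ j, a j • LinearMap.proj (R := ℝ) (φ := fun _ : Fin n => ℝ) j) x = a ⬝ᵥ x := by
    intro x
    simp [dotProduct, LinearMap.sum_apply, smul_eq_mul]
  set φ : (Fin n → ℝ) →ₗ[ℝ] ℝ :=
    ∑ j, a j • LinearMap.proj (R := ℝ) (φ := fun _ : Fin n => ℝ) j with hφdef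
  have hset : {x : Fin n → ℝ | ¬a ⬝ᵥ x ≠ 0} = (LinearMap.ker φ : Set (Fin n → ℝ)) := by
    ext x
    simp [LinearMap.mem_ker, hφ x]
  rw [hset]
  refine Measure.addHaar_submodule _ _ ?_
  intro htop
  obtain ⟨j, hj⟩ : ∃ j, a j ≠ 0 := by
    by_contra hcon
    push_neg at hcon
    exact ha (funext hcon)
  have hmem : Pi.single j (1 : ℝ) ∈ LinearMap.ker φ := by
    rw [htop]; trivial
  rw [LinearMap.mem_ker] at hmem
  rw [hφ, dotProduct_single, mul_one] at hmem
  exact hj hmem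

lemma sign_mem_Icc (r : ℝ) : Real.sign r ∈ Set.Icc (-1 : ℝ) 1 := by
  rcases lt_trichotomy r 0 with h | h | h
  · simp [Real.sign_of_neg h]
  · simp [h]
  · simp [Real.sign_of_pos h]

/-- For a standard Gaussian vector `x` on `ℝⁿ`, almost surely `⟨aᵢ, x⟩ ≠ 0` for every
column `aᵢ` of `A`, and `A · sign(Aᵀ x)` is a vertex (extreme point) of the zonotope
`Z(A)`; i.e., `x` maps to some zonotope vertex with probability one. -/
theorem ae_maps_to_vertex (n m : ℕ) (hnm : n ≤ m) (A : Matrix (Fin n) (Fin m) ℝ)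
    (hcol : ∀ i, (fun j => A j i) ≠ 0)
    (hpair : ∀ i i', i ≠ i' → ∀ c : ℝ, (fun j => A j i) ≠ c • fun j => A j i') :
    ∀ᵐ x ∂(stdGaussianPi n),
      (∀ i, Aᵀ.mulVec x i ≠ 0) ∧
        A.mulVec (signVec A x) ∈ (zonotope A).extremePoints ℝ := by
  have h1 : ∀ᵐ x ∂(stdGaussianPi n), ∀ i, Aᵀ.mulVec x i ≠ 0 := by
    rw [ae_all_iff]
    intro i
    filter_upwards [ae_dotProduct_ne n (fun j => A j i) (hcol i)] with x hx
    simpa [Matrix.mulVec, Matrix.transpose_apply, dotProduct] using hx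
  filter_upwards [h1] with x hx
  refine ⟨hx, ?_⟩
  set c : Fin m → ℝ := Aᵀ.mulVec x with hc
  set ε : Fin m → ℝ := signVec A x with hε
  have hεc : ∀ i, ε i = Real.sign (c i) := fun i => rfl
  -- pointwise bound
  have hterm : ∀ (y : Fin m → ℝ), (∀ i, y i ∈ Set.Icc (-1 : ℝ) 1) →
      ∀ i, c i * y i ≤ c i * ε i := by
    intro y hy i
    obtain ⟨hy1, hy2⟩ := hy i
    rcases lt_trichotomy (c i) 0 with h | h | h
    · rw [hεc, Real.sign_of_neg h]
      nlinarith
    · exact absurd h (hx i)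
    · rw [hεc, Real.sign_of_pos h]
      nlinarith
  -- the linear functional
  have hdot : ∀ (y : Fin m → ℝ), x ⬝ᵥ A.mulVec y = ∑ i, c i * y i := by
    intro y
    rw [dotProduct_mulVec, ← Matrix.mulVec_transpose]
    rfl
  -- maximality
  have hmax : ∀ (y : Fin m → ℝ), (∀ i, y i ∈ Set.Icc (-1 : ℝ) 1) →
      x ⬝ᵥ A.mulVec y ≤ x ⬝ᵥ A.mulVec ε := by
    intro y hy
    rw [hdot, hdot]
    exact Finset.sum_le_sum fun i _ => hterm y hy i
  -- uniqueness of maximizer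
  have huniq : ∀ (y : Fin m → ℝ), (∀ i, y i ∈ Set.Icc (-1 : ℝ) 1) →
      x ⬝ᵥ A.mulVec y = x ⬝ᵥ A.mulVec ε → y = ε := by
    intro y hy heq
    rw [hdot, hdot] at heq
    have := (Finset.sum_eq_sum_iff_of_le fun i _ => hterm y hy i).mp heq
    funext i
    exact mul_left_cancel₀ (hx i) (this i (Finset.mem_univ i))
  -- membership
  have hmem : A.mulVec ε ∈ zonotope A :=
    ⟨ε, fun i => sign_mem_Icc _, rfl⟩
  rw [mem_extremePoints]
  refine ⟨hmem, ?_⟩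
  rintro z₁ ⟨y₁, hy₁, rfl⟩ z₂ ⟨y₂, hy₂, rfl⟩ ⟨α, β, hα, hβ, hαβ, habv⟩
  have hfv : α * (x ⬝ᵥ A.mulVec y₁) + β * (x ⬝ᵥ A.mulVec y₂) = x ⬝ᵥ A.mulVec ε := by
    rw [← habv, dotProduct_add, dotProduct_smul, dotProduct_smul, smul_eq_mul, smul_eq_mul]
  have hf1 := hmax y₁ hy₁
  have hf2 := hmax y₂ hy₂
  have hv : α * (x ⬝ᵥ A.mulVec ε) + β * (x ⬝ᵥ A.mulVec ε) = x ⬝ᵥ A.mulVec ε := by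
    rw [← add_mul, hαβ, one_mul]
  have he1 : x ⬝ᵥ A.mulVec y₁ = x ⬝ᵥ A.mulVec ε := by
    by_contra h
    have h1' := mul_lt_mul_of_pos_left (lt_of_le_of_ne hf1 h) hα
    have h2' := mul_le_mul_of_nonneg_left hf2 hβ.le
    linarith
  have he2 : x ⬝ᵥ A.mulVec y₂ = x ⬝ᵥ A.mulVec ε := by
    by_contra h
    have h1' := mul_le_mul_of_nonneg_left hf1 hα.le
    have h2' := mul_lt_mul_of_pos_left (lt_of_le_of_ne hf2 h) hβ
    linarith
  rw [huniq y₁ hy₁ he1, huniq y₂ hy₂ he2]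
  exact ⟨rfl, rfl⟩
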